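/- (Per-iteration contraction of Signal Space CoSaMP) Suppose x = Dα with ‖α‖₀ ≤ k, y = Ax + e, and A satisfies the D-RIP of order 4k with constant δ_{4k}. Suppose the support estimation scheme S_D satisfies the near-optimality condition with parameters ε₁, ε₂. Then the iterate x^{ℓ+1} of Signal Space CoSaMP satisfies ‖x − x^{ℓ+1}‖ ≤ C₁‖x − x^ℓ‖ + C₂‖e‖, where C₁ = ((2+ε₁)δ_{4k} + ε₁)(2+ε₂)√((1+δ_{4k})/(1−δ_{4k})) and C₂ = (2+ε₂)((2+ε₁)(1+δ_{4k}) + 2)/√(1−δ_{4k}). -/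

import Mathlib

noncomputable section

abbrev Vec (n : ℕ) := EuclideanSpace ℂ (Fin n)

/-- Span of the columns of `D` indexed by `B`. -/
def colSpan {n d : ℕ} (D : Vec d →L[ℂ] Vec n) (B : Finset (Fin d)) : Submodule ℂ (Vec n) :=
  Submodule.span ℂ ((fun j => D (EuclideanSpace.single j 1)) '' (B : Set (Fin d)))

/-- Orthogonal projection onto the span of the columns of `D` indexed by `B`. -/
def P {n d : ℕ} (D : Vec d →L[ℂ] Vec n) (B : Finset (Fin d)) (z : Vec n) : Vec n :=
  (Submodule.orthogonalProjectionOnto (colSpan D B) z : Vec n)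

open Classical in
/-- `α` has at most `k` nonzero entries. -/
def sparse {d : ℕ} (k : ℕ) (α : Vec d) : Prop :=
  (Finset.univ.filter fun i => α i ≠ 0).card ≤ k

/-- `A` satisfies the `D`-RIP of order `k` with constant `δ`. -/
def DRIP {m n d : ℕ} (A : Vec n →L[ℂ] Vec m) (D : Vec d →L[ℂ] Vec n) (k : ℕ) (δ : ℝ) : Prop :=
  ∀ α : Vec d, sparse k α →
    Real.sqrt (1 - δ) * ‖D α‖ ≤ ‖A (D α)‖ ∧ ‖A (D α)‖ ≤ Real.sqrt (1 + δ) * ‖D α‖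

/-!
Write `v = x - xl`; it lies in the span of a set `Λ` of `2k` columns. On the span of at most `4k`
columns the D-RIP makes `A* A` a `δ`-perturbation of the identity (polarize the quadratic bound),
so the proxy `h = A* (A v + e)`, compressed to the span of `Λ ∪ Ωopt`, is within
`b = δ ‖v‖ + √(1 + δ) ‖e‖` of `v`. Because `Ωopt` captures at least as much of `h` as the
competitor `Λ`, `P_Ωopt h` is within `2 b` of `v`, and near-optimality moves `P_Ω h` by at most
`ε₁ (‖v‖ + b)`; hence `x` is within `2 b + ε₁ (‖v‖ + b)` of the span of `T = Ω ∪ Γ`. The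
least-squares step loses a factor `√((1 + δ) / (1 - δ))` plus `2 ‖e‖ / √(1 - δ)`, and pruning by a
near-optimal projection loses a factor `2 + ε₂`.
-/

open scoped InnerProductSpace

namespace Submodule

variable {𝕜 E : Type*} [RCLike 𝕜] [NormedAddCommGroup E] [InnerProductSpace 𝕜 E]

lemma norm_sub_starProjection_le (K : Submodule 𝕜 E) [K.HasOrthogonalProjection] (x : E)
    {w : E} (hw : w ∈ K) : ‖x - K.starProjection x‖ ≤ ‖x - w‖ := by
  rw [starProjection_minimal]
  exact ciInf_le ⟨0, by rintro _ ⟨_, rfl⟩; exact norm_nonneg _⟩ (⟨w, hw⟩ : K)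

lemma norm_sub_starProjection_sq (K : Submodule 𝕜 E) [K.HasOrthogonalProjection] (x : E) :
    ‖x - K.starProjection x‖ ^ 2 = ‖x‖ ^ 2 - ‖K.starProjection x‖ ^ 2 := by
  rw [K.norm_sq_eq_add_norm_sq_starProjection x, starProjection_orthogonal']
  simp

lemma norm_sub_starProjection_le_iff {V W : Submodule 𝕜 E} [V.HasOrthogonalProjection]
    [W.HasOrthogonalProjection] (x : E) :
    ‖x - W.starProjection x‖ ≤ ‖x - V.starProjection x‖ ↔
      ‖V.starProjection x‖ ≤ ‖W.starProjection x‖ := by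
  rw [← sq_le_sq₀ (norm_nonneg _) (norm_nonneg _), ← sq_le_sq₀ (norm_nonneg _) (norm_nonneg _),
    norm_sub_starProjection_sq, norm_sub_starProjection_sq, sub_le_sub_iff_left]

lemma starProjection_starProjection_of_le {U V : Submodule 𝕜 E} [U.HasOrthogonalProjection]
    [V.HasOrthogonalProjection] (h : U ≤ V) (x : E) :
    U.starProjection (V.starProjection x) = U.starProjection x :=
  DFunLike.congr_fun (starProjection_comp_starProjection_of_le h) x

lemma norm_sub_starProjection_le_of_mem_of_le {T W : Submodule 𝕜 E} [T.HasOrthogonalProjection]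
    [W.HasOrthogonalProjection] (hWT : W ≤ T) {w : E} (hw : w ∈ T) (x : E) :
    ‖x - T.starProjection x‖ ≤ ‖(x - w) - W.starProjection (x - w)‖ :=
  (T.norm_sub_starProjection_le x (T.add_mem hw (hWT (W.starProjection_apply_mem _)))).trans_eq
    (by congr 1; abel)

section Identification

variable {U V W : Submodule 𝕜 E} [U.HasOrthogonalProjection] [V.HasOrthogonalProjection]
  [W.HasOrthogonalProjection] {h v : E} {b : ℝ}

lemma norm_sub_starProjection_le_two_mul (hVU : V ≤ U) (hWU : W ≤ U) (hv : v ∈ V)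
    (hb : ‖U.starProjection h - v‖ ≤ b)
    (hW : ‖h - W.starProjection h‖ ≤ ‖h - V.starProjection h‖) :
    ‖v - W.starProjection h‖ ≤ 2 * b := by
  set g := U.starProjection h
  have hgW : W.starProjection g = W.starProjection h := starProjection_starProjection_of_le hWU h
  have hgV : V.starProjection g = V.starProjection h := starProjection_starProjection_of_le hVU h
  have hg : ‖g - W.starProjection g‖ ≤ ‖g - V.starProjection g‖ := by
    rw [norm_sub_starProjection_le_iff, hgW, hgV, ← norm_sub_starProjection_le_iff]
    exact hW
  calc ‖v - W.starProjection h‖ ≤ ‖v - g‖ + ‖g - W.starProjection g‖ := by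
        rw [hgW]; exact norm_sub_le_norm_sub_add_norm_sub _ _ _
    _ ≤ b + ‖g - v‖ := by
        gcongr
        · rwa [norm_sub_rev]
        · exact hg.trans (V.norm_sub_starProjection_le g hv)
    _ ≤ 2 * b := by linarith

lemma norm_starProjection_le_of_le (hWU : W ≤ U) (hb : ‖U.starProjection h - v‖ ≤ b) :
    ‖W.starProjection h‖ ≤ ‖v‖ + b := by
  rw [← starProjection_starProjection_of_le hWU h]
  calc ‖W.starProjection (U.starProjection h)‖ ≤ ‖U.starProjection h‖ :=
        W.norm_starProjection_apply_le _
    _ ≤ ‖v‖ + ‖U.starProjection h - v‖ := norm_le_insert' _ _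
    _ ≤ ‖v‖ + b := by gcongr

lemma norm_sub_starProjection_le_of_nearOptimal {W' : Submodule 𝕜 E}
    [W'.HasOrthogonalProjection] {ε : ℝ} (hε : 0 ≤ ε) (hVU : V ≤ U) (hWU : W ≤ U) (hv : v ∈ V)
    (hb : ‖U.starProjection h - v‖ ≤ b)
    (hW : ‖h - W.starProjection h‖ ≤ ‖h - V.starProjection h‖)
    (hW' : ‖W.starProjection h - W'.starProjection h‖ ≤ ε * ‖W.starProjection h‖) :
    ‖v - W'.starProjection v‖ ≤ 2 * b + ε * (‖v‖ + b) :=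
  calc ‖v - W'.starProjection v‖ ≤ ‖v - W'.starProjection h‖ :=
        W'.norm_sub_starProjection_le v (W'.starProjection_apply_mem h)
    _ ≤ ‖v - W.starProjection h‖ + ‖W.starProjection h - W'.starProjection h‖ :=
        norm_sub_le_norm_sub_add_norm_sub _ _ _
    _ ≤ 2 * b + ε * (‖v‖ + b) :=
        add_le_add (norm_sub_starProjection_le_two_mul hVU hWU hv hb hW)
          (hW'.trans (mul_le_mul_of_nonneg_left (norm_starProjection_le_of_le hWU hb) hε))

end Identification

end Submodule

section RestrictedIsometry

variable {𝕜 E F : Type*} [RCLike 𝕜] [NormedAddCommGroup E] [InnerProductSpace 𝕜 E]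
  [NormedAddCommGroup F] [InnerProductSpace 𝕜 F]
  {A : E →L[𝕜] F} {U : Submodule 𝕜 E} {δ : ℝ}

open RCLike

lemma norm_map_le_sqrt_mul (hA : ∀ u ∈ U, |‖A u‖ ^ 2 - ‖u‖ ^ 2| ≤ δ * ‖u‖ ^ 2) {u : E}
    (hu : u ∈ U) : ‖A u‖ ≤ √(1 + δ) * ‖u‖ := by
  rw [← Real.sqrt_sq (norm_nonneg u), ← Real.sqrt_mul' _ (sq_nonneg _)]
  apply Real.le_sqrt_of_sq_le
  linarith [(abs_le.1 (hA u hu)).2]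

lemma abs_re_inner_map_sub_le_of_norm_eq_one
    (hA : ∀ u ∈ U, |‖A u‖ ^ 2 - ‖u‖ ^ 2| ≤ δ * ‖u‖ ^ 2) {u w : E} (hu : u ∈ U) (hw : w ∈ U)
    (hu1 : ‖u‖ = 1) (hw1 : ‖w‖ = 1) : |re ⟪A u, A w⟫_𝕜 - re ⟪u, w⟫_𝕜| ≤ δ := by
  have hp := hA _ (U.add_mem hu hw)
  have hm := hA _ (U.sub_mem hu hw)
  rw [map_add, norm_add_sq (𝕜 := 𝕜), norm_add_sq (𝕜 := 𝕜)] at hp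
  rw [map_sub, norm_sub_sq (𝕜 := 𝕜), norm_sub_sq (𝕜 := 𝕜)] at hm
  rw [hu1, hw1] at hp hm
  rw [abs_le] at hp hm ⊢
  constructor <;> linarith [hp.1, hp.2, hm.1, hm.2]

lemma abs_re_inner_map_sub_le (hA : ∀ u ∈ U, |‖A u‖ ^ 2 - ‖u‖ ^ 2| ≤ δ * ‖u‖ ^ 2) {u w : E}
    (hu : u ∈ U) (hw : w ∈ U) : |re ⟪A u, A w⟫_𝕜 - re ⟪u, w⟫_𝕜| ≤ δ * ‖u‖ * ‖w‖ := by
  rcases eq_or_ne u 0 with rfl | hu0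
  · simp
  rcases eq_or_ne w 0 with rfl | hw0
  · simp
  have key := abs_re_inner_map_sub_le_of_norm_eq_one hA
    (U.smul_mem (‖u‖ : 𝕜)⁻¹ hu) (U.smul_mem (‖w‖ : 𝕜)⁻¹ hw)
    (norm_smul_inv_norm hu0) (norm_smul_inv_norm hw0)
  simp only [map_smul, inner_smul_left, inner_smul_right, map_inv₀, conj_ofReal] at key
  rw [← mul_assoc, ← mul_assoc, ← ofReal_inv, ← ofReal_inv, ← ofReal_mul, re_ofReal_mul,
    re_ofReal_mul, ← mul_sub, abs_mul] at key
  have hpos : 0 < ‖w‖⁻¹ * ‖u‖⁻¹ := by positivity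
  rw [abs_of_pos hpos, ← le_div_iff₀' hpos] at key
  refine key.trans_eq ?_
  field_simp

lemma norm_starProjection_adjoint_sub_le [CompleteSpace E] [CompleteSpace F]
    [U.HasOrthogonalProjection] (hδ : 0 ≤ δ)
    (hA : ∀ u ∈ U, |‖A u‖ ^ 2 - ‖u‖ ^ 2| ≤ δ * ‖u‖ ^ 2) {v : E} (hv : v ∈ U) (e : F) :
    ‖U.starProjection (A.adjoint (A v + e)) - v‖ ≤ δ * ‖v‖ + √(1 + δ) * ‖e‖ := by
  set h := A.adjoint (A v + e)
  set z := U.starProjection h - v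
  have hz : z ∈ U := U.sub_mem (U.starProjection_apply_mem h) hv
  have hproj : re ⟪U.starProjection h, z⟫_𝕜 = re ⟪h, z⟫_𝕜 := by
    have := U.starProjection_inner_eq_zero h z hz
    rw [inner_sub_left, sub_eq_zero] at this
    rw [this]
  have hsq : ‖z‖ ^ 2 = (re ⟪A v, A z⟫_𝕜 - re ⟪v, z⟫_𝕜) + re ⟪e, A z⟫_𝕜 := by
    rw [← inner_self_eq_norm_sq (𝕜 := 𝕜), inner_sub_left, map_sub, hproj,
      ContinuousLinearMap.adjoint_inner_left, inner_add_left, map_add]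
    ring
  have hnoise : re ⟪e, A z⟫_𝕜 ≤ ‖e‖ * (√(1 + δ) * ‖z‖) :=
    (re_le_norm _).trans <| (norm_inner_le_norm _ _).trans <|
      mul_le_mul_of_nonneg_left (norm_map_le_sqrt_mul hA hz) (norm_nonneg e)
  have hsignal := (abs_le.1 (abs_re_inner_map_sub_le hA hv hz)).2
  have hb : 0 ≤ δ * ‖v‖ + √(1 + δ) * ‖e‖ := by positivity
  nlinarith [norm_nonneg z]

end RestrictedIsometry

section NormedGroup

variable {E F : Type*} [SeminormedAddCommGroup E] [SeminormedAddCommGroup F]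

lemma norm_sub_le_of_norm_residual_le {M : Type*} [FunLike M E F] [AddMonoidHomClass M E F]
    (A : M) {x x' w : E} {e : F} {a c : ℝ} (ha : 0 < a)
    (hres : ‖A x + e - A x'‖ ≤ ‖A x + e - A w‖)
    (hlo : a * ‖x - x'‖ ≤ ‖A (x - x')‖) (hhi : ‖A (x - w)‖ ≤ c * ‖x - w‖) :
    ‖x - x'‖ ≤ c / a * ‖x - w‖ + 2 / a * ‖e‖ := by
  have key : a * ‖x - x'‖ ≤ c * ‖x - w‖ + 2 * ‖e‖ :=
    calc a * ‖x - x'‖ ≤ ‖A (x - x')‖ := hlo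
      _ = ‖(A x + e - A x') - e‖ := by rw [map_sub]; congr 1; abel
      _ ≤ ‖A x + e - A x'‖ + ‖e‖ := norm_sub_le _ _
      _ ≤ ‖A x + e - A w‖ + ‖e‖ := by gcongr
      _ = ‖A (x - w) + e‖ + ‖e‖ := by rw [map_sub]; congr 2; abel
      _ ≤ c * ‖x - w‖ + 2 * ‖e‖ := by linarith [norm_add_le (A (x - w)) e]
  rw [div_mul_eq_mul_div, div_mul_eq_mul_div, ← add_div, le_div_iff₀ ha]
  linarith

lemma norm_sub_le_two_add_mul {x y p q : E} {ε : ℝ} (hε : 0 ≤ ε) (hp : ‖y - p‖ ≤ ‖y - x‖)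
    (hq : ‖p - q‖ ≤ ε * ‖y - p‖) : ‖x - q‖ ≤ (2 + ε) * ‖x - y‖ := by
  rw [norm_sub_rev y x] at hp
  calc ‖x - q‖ ≤ ‖x - y‖ + ‖y - p‖ + ‖p - q‖ :=
        (norm_sub_le_norm_sub_add_norm_sub _ p _).trans
          (add_le_add_left (norm_sub_le_norm_sub_add_norm_sub _ _ _) _)
    _ ≤ ‖x - y‖ + ‖x - y‖ + ε * ‖x - y‖ := by gcongr; exact hq.trans (by gcongr)
    _ = (2 + ε) * ‖x - y‖ := by ring

end NormedGroup

section ColumnSpan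

variable {m n d : ℕ} (D : Vec d →L[ℂ] Vec n)

lemma colSpan_eq_map (B : Finset (Fin d)) :
    colSpan D B =
      (Submodule.span ℂ (PiLp.basisFun 2 ℂ (Fin d) '' B)).map (D : Vec d →ₗ[ℂ] Vec n) := by
  rw [Submodule.map_span, Set.image_image, colSpan]
  simp

lemma mem_colSpan_iff (B : Finset (Fin d)) (z : Vec n) :
    z ∈ colSpan D B ↔ ∃ γ : Vec d, (∀ i ∉ B, γ i = 0) ∧ D γ = z := by
  simp only [colSpan_eq_map, Submodule.mem_map, Module.Basis.mem_span_image, Set.subset_def,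
    Finset.mem_coe, Finsupp.mem_support_iff, PiLp.basisFun_repr, ContinuousLinearMap.coe_coe]
  exact exists_congr fun γ => and_congr_left fun _ => forall_congr' fun i => not_imp_comm

lemma colSpan_mono {S T : Finset (Fin d)} (h : S ⊆ T) : colSpan D S ≤ colSpan D T :=
  Submodule.span_mono (Set.image_mono (Finset.coe_subset.2 h))

lemma exists_card_le_mem_colSpan_of_sparse {k : ℕ} {α : Vec d} (hα : sparse k α) :
    ∃ S : Finset (Fin d), S.card ≤ k ∧ D α ∈ colSpan D S := by
  unfold sparse at hα
  refine ⟨_, hα, (mem_colSpan_iff D _ _).2 ⟨α, fun i hi => ?_, rfl⟩⟩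
  by_contra h
  exact hi (Finset.mem_filter.2 ⟨Finset.mem_univ i, h⟩)

lemma exists_card_eq_colSpan_le {S : Finset (Fin d)} {j : ℕ} (hS : S.card ≤ j) (hj : j ≤ d) :
    ∃ Λ : Finset (Fin d), Λ.card = j ∧ colSpan D S ≤ colSpan D Λ := by
  obtain ⟨Λ, hSΛ, hΛ⟩ := Finset.exists_superset_card_eq hS (by simpa using hj)
  exact ⟨Λ, hΛ, colSpan_mono D hSΛ⟩

lemma norm_sub_P_le_of_nearOptimal {S Γopt Γ' : Finset (Fin d)} {j : ℕ} (hS : S.card ≤ j)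
    (hj : j ≤ d) {ε : ℝ} (hε : 0 ≤ ε) {x xt : Vec n} (hx : x ∈ colSpan D S)
    (hopt : ∀ Λ : Finset (Fin d), Λ.card = j → ‖xt - P D Γopt xt‖ ≤ ‖xt - P D Λ xt‖)
    (hnear : ‖P D Γopt xt - P D Γ' xt‖ ≤ ε * ‖xt - P D Γopt xt‖) :
    ‖x - P D Γ' xt‖ ≤ (2 + ε) * ‖x - xt‖ := by
  obtain ⟨Λ, hΛcard, hΛ⟩ := exists_card_eq_colSpan_le D hS hj
  exact norm_sub_le_two_add_mul hε
    ((hopt Λ hΛcard).trans ((colSpan D Λ).norm_sub_starProjection_le xt (hΛ hx))) hnear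

variable {A : Vec n →L[ℂ] Vec m} {D} {k : ℕ} {δ : ℝ} {S : Finset (Fin d)}

lemma DRIP.of_mem_colSpan (hA : DRIP A D k δ) (hS : S.card ≤ k) {z : Vec n}
    (hz : z ∈ colSpan D S) : √(1 - δ) * ‖z‖ ≤ ‖A z‖ ∧ ‖A z‖ ≤ √(1 + δ) * ‖z‖ := by
  obtain ⟨γ, hγ, rfl⟩ := (mem_colSpan_iff D S z).1 hz
  classical
  refine hA γ ((Finset.card_le_card fun i hi => ?_).trans hS)
  by_contra h
  exact (Finset.mem_filter.1 hi).2 (hγ i h)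

lemma DRIP.abs_norm_sq_sub_le (hA : DRIP A D k δ) (hδ0 : 0 ≤ δ) (hδ1 : δ ≤ 1)
    (hS : S.card ≤ k) : ∀ z ∈ colSpan D S, |‖A z‖ ^ 2 - ‖z‖ ^ 2| ≤ δ * ‖z‖ ^ 2 := by
  intro z hz
  obtain ⟨hlo, hhi⟩ := hA.of_mem_colSpan hS hz
  have hlo2 := pow_le_pow_left₀ (by positivity) hlo 2
  have hhi2 := pow_le_pow_left₀ (norm_nonneg _) hhi 2
  rw [mul_pow, Real.sq_sqrt (by linarith)] at hlo2 hhi2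
  rw [abs_le]
  constructor <;> linarith

lemma DRIP.norm_sub_le_of_forall_norm_le (hA : DRIP A D k δ) (hδ1 : δ < 1)
    {S T : Finset (Fin d)} (hST : (S ∪ T).card ≤ k) {x xt : Vec n} (hx : x ∈ colSpan D S)
    (hxt : xt ∈ colSpan D T) (e : Vec m)
    (hmin : ∀ z ∈ colSpan D T, ‖A x + e - A xt‖ ≤ ‖A x + e - A z‖) :
    ‖x - xt‖ ≤ √((1 + δ) / (1 - δ)) * ‖x - P D T x‖ + 2 / √(1 - δ) * ‖e‖ := by
  have hxST : x ∈ colSpan D (S ∪ T) := colSpan_mono D Finset.subset_union_left hx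
  have hTST : colSpan D T ≤ colSpan D (S ∪ T) := colSpan_mono D Finset.subset_union_right
  have hPx := (colSpan D T).starProjection_apply_mem x
  rw [Real.sqrt_div' _ (by linarith)]
  exact norm_sub_le_of_norm_residual_le A (Real.sqrt_pos.2 (by linarith)) (hmin _ hPx)
    (hA.of_mem_colSpan hST (Submodule.sub_mem _ hxST (hTST hxt))).1
    (hA.of_mem_colSpan hST (Submodule.sub_mem _ hxST (hTST hPx))).2

lemma DRIP.norm_sub_P_le_of_nearOptimal_proxy (hA : DRIP A D (4 * k) δ) (hδ0 : 0 ≤ δ)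
    (hδ1 : δ ≤ 1) {ε : ℝ} (hε : 0 ≤ ε) {Λ Ωopt Ω : Finset (Fin d)} (hΛ : Λ.card = 2 * k)
    (hΩopt : Ωopt.card = 2 * k) {v : Vec n} (hv : v ∈ colSpan D Λ) (e : Vec m)
    (hopt : ‖A.adjoint (A v + e) - P D Ωopt (A.adjoint (A v + e))‖ ≤
      ‖A.adjoint (A v + e) - P D Λ (A.adjoint (A v + e))‖)
    (hnear : ‖P D Ωopt (A.adjoint (A v + e)) - P D Ω (A.adjoint (A v + e))‖ ≤
      ε * ‖P D Ωopt (A.adjoint (A v + e))‖) :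
    ‖v - P D Ω v‖ ≤ 2 * (δ * ‖v‖ + √(1 + δ) * ‖e‖) + ε * (‖v‖ + (δ * ‖v‖ + √(1 + δ) * ‖e‖)) := by
  have hΛΩ : colSpan D Λ ≤ colSpan D (Λ ∪ Ωopt) := colSpan_mono D Finset.subset_union_left
  have hproxy := norm_starProjection_adjoint_sub_le hδ0
    (hA.abs_norm_sq_sub_le hδ0 hδ1 ((Finset.card_union_le Λ Ωopt).trans (by omega))) (hΛΩ hv) e
  exact Submodule.norm_sub_starProjection_le_of_nearOptimal hε hΛΩ
    (colSpan_mono D Finset.subset_union_right) hv hproxy hopt hnear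

end ColumnSpan

theorem stmt8_general {m n d k : ℕ} (A : Vec n →L[ℂ] Vec m) (D : Vec d →L[ℂ] Vec n)
    (δ ε₁ ε₂ : ℝ) (hδ0 : 0 < δ) (hδ1 : δ < 1) (hε₁ : 0 ≤ ε₁) (hε₂ : 0 ≤ ε₂)
    (hRIP : DRIP A D (4 * k) δ)
    (x : Vec n) (α : Vec d) (hα : sparse k α) (hx : x = D α)
    (e : Vec m) (y : Vec m) (hy : y = A x + e)
    -- current iterate: `xl` is `k`-sparse in `D`, supported on `Γ`
    (xl : Vec n) (Γ : Finset (Fin d)) (hΓcard : Γ.card = k) (hxlΓ : xl ∈ colSpan D Γ)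
    -- proxy
    (h : Vec n) (hh : h = (ContinuousLinearMap.adjoint A) (y - A xl))
    -- identify: near-optimal support of size 2k for h
    (Ωopt Ω : Finset (Fin d)) (hΩoptCard : Ωopt.card = 2 * k)
    (hΩopt : ∀ Λ : Finset (Fin d), Λ.card = 2 * k → ‖h - P D Ωopt h‖ ≤ ‖h - P D Λ h‖)
    (hΩcard : Ω.card = 2 * k)
    (hΩnear : ‖P D Ωopt h - P D Ω h‖ ≤
      min (ε₁ * ‖P D Ωopt h‖) (ε₂ * ‖h - P D Ωopt h‖))
    -- merge
    (T : Finset (Fin d)) (hT : T = Ω ∪ Γ)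
    -- update: least squares over R(D_T)
    (xt : Vec n) (hxtT : xt ∈ colSpan D T)
    (hxtMin : ∀ z ∈ colSpan D T, ‖y - A xt‖ ≤ ‖y - A z‖)
    -- prune: near-optimal support of size k for xt
    (Γopt' Γ' : Finset (Fin d))
    (hΓopt' : ∀ Λ : Finset (Fin d), Λ.card = k → ‖xt - P D Γopt' xt‖ ≤ ‖xt - P D Λ xt‖)
    (hΓnear' : ‖P D Γopt' xt - P D Γ' xt‖ ≤
      min (ε₁ * ‖P D Γopt' xt‖) (ε₂ * ‖xt - P D Γopt' xt‖))
    (xnext : Vec n) (hxnext : xnext = P D Γ' xt) :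
    ‖x - xnext‖ ≤
      ((2 + ε₁) * δ + ε₁) * (2 + ε₂) * Real.sqrt ((1 + δ) / (1 - δ)) * ‖x - xl‖ +
        ((2 + ε₂) * ((2 + ε₁) * (1 + δ) + 2) / Real.sqrt (1 - δ)) * ‖e‖ := by
  have hd : 2 * k ≤ d := by simpa [hΩoptCard] using Ωopt.card_le_univ
  have hTcard : T.card ≤ 3 * k := hT ▸ (Finset.card_union_le Ω Γ).trans (by omega)
  obtain ⟨S, hS, hxS⟩ := exists_card_le_mem_colSpan_of_sparse D hα
  rw [← hx] at hxS
  obtain ⟨Λ, hΛcard, hΛ⟩ :=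
    exists_card_eq_colSpan_le D ((Finset.card_union_le S Γ).trans (by omega)) hd
  have hv : x - xl ∈ colSpan D Λ := hΛ (Submodule.sub_mem _
    (colSpan_mono D Finset.subset_union_left hxS) (colSpan_mono D Finset.subset_union_right hxlΓ))
  rw [hy, show A x + e - A xl = A (x - xl) + e by rw [map_sub]; abel] at hh
  subst hh
  have hident := hRIP.norm_sub_P_le_of_nearOptimal_proxy hδ0.le hδ1.le hε₁ hΛcard hΩoptCard hv e
    (hΩopt Λ hΛcard) (hΩnear.trans (min_le_left _ _))
  have hmerge : ‖x - P D T x‖ ≤ ‖(x - xl) - P D Ω (x - xl)‖ :=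
    Submodule.norm_sub_starProjection_le_of_mem_of_le
      (colSpan_mono D (hT ▸ Finset.subset_union_left))
      (colSpan_mono D (hT ▸ Finset.subset_union_right) hxlΓ) x
  have hls := hRIP.norm_sub_le_of_forall_norm_le hδ1
    ((Finset.card_union_le S T).trans (by omega)) hxS hxtT e (hy ▸ hxtMin)
  have hprune : ‖x - xnext‖ ≤ (2 + ε₂) * ‖x - xt‖ :=
    hxnext ▸ norm_sub_P_le_of_nearOptimal D hS (by simpa [hΓcard] using Γ.card_le_univ) hε₂ hxS
      hΓopt' (hΓnear'.trans (min_le_right _ _))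
  have hs : √(1 + δ) ^ 2 = 1 + δ := Real.sq_sqrt (by linarith)
  calc ‖x - xnext‖ ≤ (2 + ε₂) * ‖x - xt‖ := hprune
    _ ≤ (2 + ε₂) * (√((1 + δ) / (1 - δ)) * (2 * (δ * ‖x - xl‖ + √(1 + δ) * ‖e‖) +
          ε₁ * (‖x - xl‖ + (δ * ‖x - xl‖ + √(1 + δ) * ‖e‖))) + 2 / √(1 - δ) * ‖e‖) := by
        gcongr
        exact hls.trans (by gcongr; exact hmerge.trans hident)
    _ = _ := by
        rw [Real.sqrt_div' _ (by linarith)]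
        linear_combination (2 + ε₂) * (2 + ε₁) * ‖e‖ / √(1 - δ) * hs

theorem stmt8 {m n d k : ℕ} (A : Vec n →L[ℂ] Vec m) (D : Vec d →L[ℂ] Vec n)
    (δ ε₁ ε₂ : ℝ) (hδ0 : 0 < δ) (hδ1 : δ < 1) (hε₁ : 0 ≤ ε₁) (hε₂ : 0 ≤ ε₂)
    (hRIP : DRIP A D (4 * k) δ)
    (x : Vec n) (α : Vec d) (hα : sparse k α) (hx : x = D α)
    (e : Vec m) (y : Vec m) (hy : y = A x + e)
    -- current iterate: `xl` is `k`-sparse in `D`, supported on `Γ`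
    (xl : Vec n) (Γ : Finset (Fin d)) (hΓcard : Γ.card = k) (hxlΓ : xl ∈ colSpan D Γ)
    (β : Vec d) (hβ : sparse k β) (hxl : xl = D β)
    -- proxy
    (h : Vec n) (hh : h = (ContinuousLinearMap.adjoint A) (y - A xl))
    -- identify: near-optimal support of size 2k for h
    (Ωopt Ω : Finset (Fin d)) (hΩoptCard : Ωopt.card = 2 * k)
    (hΩopt : ∀ Λ : Finset (Fin d), Λ.card = 2 * k → ‖h - P D Ωopt h‖ ≤ ‖h - P D Λ h‖)
    (hΩcard : Ω.card = 2 * k)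
    (hΩnear : ‖P D Ωopt h - P D Ω h‖ ≤
      min (ε₁ * ‖P D Ωopt h‖) (ε₂ * ‖h - P D Ωopt h‖))
    -- merge
    (T : Finset (Fin d)) (hT : T = Ω ∪ Γ)
    -- update: least squares over R(D_T)
    (xt : Vec n) (hxtT : xt ∈ colSpan D T)
    (hxtMin : ∀ z ∈ colSpan D T, ‖y - A xt‖ ≤ ‖y - A z‖)
    -- prune: near-optimal support of size k for xt
    (Γopt' Γ' : Finset (Fin d)) (hΓoptCard' : Γopt'.card = k)
    (hΓopt' : ∀ Λ : Finset (Fin d), Λ.card = k → ‖xt - P D Γopt' xt‖ ≤ ‖xt - P D Λ xt‖)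
    (hΓcard' : Γ'.card = k)
    (hΓnear' : ‖P D Γopt' xt - P D Γ' xt‖ ≤
      min (ε₁ * ‖P D Γopt' xt‖) (ε₂ * ‖xt - P D Γopt' xt‖))
    (xnext : Vec n) (hxnext : xnext = P D Γ' xt) :
    ‖x - xnext‖ ≤
      ((2 + ε₁) * δ + ε₁) * (2 + ε₂) * Real.sqrt ((1 + δ) / (1 - δ)) * ‖x - xl‖ +
        ((2 + ε₂) * ((2 + ε₁) * (1 + δ) + 2) / Real.sqrt (1 - δ)) * ‖e‖ :=
  stmt8_general A D δ ε₁ ε₂ hδ0 hδ1 hε₁ hε₂ hRIP x α hα hx e y hy xl Γ hΓcard hxlΓ h hh Ωopt Ω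
    hΩoptCard hΩopt hΩcard hΩnear T hT xt hxtT hxtMin Γopt' Γ' hΓopt' hΓnear' xnext hxnext
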